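/- Let f : ℝ^d → ℝ be L-smooth, h : ℝ^d → ℝ convex, F = f + h, γ > 0, and v ∈ ℝ^d arbitrary. Set x̄ := prox_{γh}(x − γ v). Then for every w ∈ ℝ^d: F(x̄) ≤ F(w) + ⟨∇f(x) − v, x̄ − w⟩ − (1/γ)⟨x̄ − x, x̄ − w⟩ + (L/2)‖x̄ − x‖² + (L/2)‖w − x‖². -/

import Mathlib

/-! The descent lemma bounds `f x̄` from above and `f w` from below by the linearisation of `f`
at `x`, each up to `(L/2)‖· - x‖²`. The prox optimality condition says that
`(x - γ v - x̄) / γ` is a subgradient of `h` at `x̄`: restricted to the segment from `x̄` to `w`,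
convexity of `h` turns minimality of `h + ‖· - (x - γ v)‖² / (2γ)` at `x̄` into a one-variable
minimum at an endpoint, where the derivative is nonnegative. Adding the three inequalities gives
the bound. -/

open RealInnerProductSpace Set

theorem norm_sub_sub_fderiv_apply_le {E F : Type*} [NormedAddCommGroup E] [NormedSpace ℝ E]
    [NormedAddCommGroup F] [NormedSpace ℝ F] {f : E → F} {f' : E → E →L[ℝ] F} {L : ℝ} {x : E}
    (hf : ∀ z, HasFDerivAt f (f' z) z) (hL : ∀ z, ‖f' z - f' x‖ ≤ L * ‖z - x‖) (y : E) :
    ‖f y - f x - f' x (y - x)‖ ≤ L / 2 * ‖y - x‖ ^ 2 := by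
  set D := y - x
  let φ : ℝ → F := fun t => f (x + t • D) - f x - t • f' x D
  have hφ (t : ℝ) : HasDerivAt φ (f' (x + t • D) D - f' x D) t := by
    have hline : HasDerivAt (fun t : ℝ => x + t • D) D t := by
      simpa using ((hasDerivAt_id t).smul_const D).const_add x
    exact ((((hf _).comp_hasDerivAt t hline).sub_const (f x)).sub
      ((hasDerivAt_id t).smul_const (f' x D))).congr_deriv (by simp)
  have hB (t : ℝ) : HasDerivAt (fun t => L / 2 * t ^ 2 * ‖D‖ ^ 2) (L * t * ‖D‖ ^ 2) t :=
    (((hasDerivAt_pow 2 t).const_mul (L / 2)).mul_const (‖D‖ ^ 2)).congr_deriv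
      (by norm_num only; ring)
  have hφ_le (t : ℝ) (ht : t ∈ Ico (0 : ℝ) 1) :
      ‖f' (x + t • D) D - f' x D‖ ≤ L * t * ‖D‖ ^ 2 :=
    calc ‖f' (x + t • D) D - f' x D‖ = ‖(f' (x + t • D) - f' x) D‖ := rfl
      _ ≤ ‖f' (x + t • D) - f' x‖ * ‖D‖ := (f' (x + t • D) - f' x).le_opNorm D
      _ ≤ L * ‖t • D‖ * ‖D‖ := by
        gcongr
        simpa using hL (x + t • D)
      _ = L * t * ‖D‖ ^ 2 := by rw [norm_smul, Real.norm_of_nonneg ht.1]; ring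
  have := image_norm_le_of_norm_deriv_right_le_deriv_boundary
    (fun t _ => (hφ t).continuousAt.continuousWithinAt) (fun t _ => (hφ t).hasDerivWithinAt)
    (by simp [φ]) hB hφ_le (right_mem_Icc.2 zero_le_one)
  simpa [φ, D] using this

theorem abs_sub_sub_inner_gradient_le {E : Type*} [NormedAddCommGroup E]
    [InnerProductSpace ℝ E] [CompleteSpace E] {f : E → ℝ} {L : ℝ} {x : E}
    (hf : Differentiable ℝ f) (hL : ∀ z, ‖gradient f z - gradient f x‖ ≤ L * ‖z - x‖) (y : E) :
    |f y - f x - ⟪gradient f x, y - x⟫| ≤ L / 2 * ‖y - x‖ ^ 2 := by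
  refine norm_sub_sub_fderiv_apply_le (fun z => (hf z).hasGradientAt.hasFDerivAt)
    (fun z => ?_) y
  rw [← map_sub, LinearIsometryEquiv.norm_map]
  exact hL z

theorem ConvexOn.sub_le_of_isMinOn_add {E : Type*} [NormedAddCommGroup E] [NormedSpace ℝ E]
    {s : Set E} {h q : E → ℝ} {q' : E →L[ℝ] ℝ} {a b : E} (hh : ConvexOn ℝ s h)
    (hmin : IsMinOn (h + q) s a) (hq : HasFDerivAt q q' a) (ha : a ∈ s) (hb : b ∈ s) :
    h a - q' (b - a) ≤ h b := by
  let G : ℝ → ℝ := fun t => q (a + t • (b - a)) + t * (h b - h a)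
  have hG : HasDerivAt G (q' (b - a) + (h b - h a)) 0 := by
    have hline : HasDerivAt (fun t : ℝ => a + t • (b - a)) (b - a) 0 := by
      simpa using ((hasDerivAt_id (0 : ℝ)).smul_const (b - a)).const_add a
    exact ((hq.comp_hasDerivAt_of_eq 0 hline (by simp)).add
      ((hasDerivAt_id (0 : ℝ)).mul_const (h b - h a))).congr_deriv (by simp)
  have hG_min : IsMinOn G (Icc 0 1) 0 := by
    rintro t ⟨ht0, ht1⟩
    have hp : a + t • (b - a) = (1 - t) • a + t • b := by
      rw [sub_smul, one_smul, smul_sub]; abel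
    have hconv : h (a + t • (b - a)) ≤ (1 - t) • h a + t • h b :=
      hp ▸ hh.2 ha hb (by linarith) ht0 (by ring)
    have hle := hmin (hp ▸ hh.1 ha hb (by linarith) ht0 (by ring) : a + t • (b - a) ∈ s)
    simp only [mem_ofPred_eq, Pi.add_apply, smul_eq_mul] at hle hconv
    simp only [mem_ofPred_eq, G, zero_smul, add_zero, zero_mul]
    nlinarith
  have := hG_min.localize.hasFDerivWithinAt_nonneg hG.hasDerivWithinAt.hasFDerivWithinAt
    (y := 1) (mem_posTangentConeAt_of_segment_subset (by simp [segment_eq_Icc]))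
  simp only [ContinuousLinearMap.toSpanSingleton_apply, smul_eq_mul, one_mul] at this
  linarith

theorem ConvexOn.add_inner_div_le_of_prox {E : Type*} [NormedAddCommGroup E]
    [InnerProductSpace ℝ E] {h : E → ℝ} (hh : ConvexOn ℝ univ h) {γ : ℝ} {z p : E}
    (hp : ∀ y, h p + ‖p - z‖ ^ 2 / (2 * γ) ≤ h y + ‖y - z‖ ^ 2 / (2 * γ)) (w : E) :
    h p + ⟪z - p, w - p⟫ / γ ≤ h w := by
  have hq := (((hasFDerivAt_id p).sub_const z).norm_sq).mul_const (2 * γ)⁻¹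
  have := hh.sub_le_of_isMinOn_add (q := fun y => ‖y - z‖ ^ 2 / (2 * γ))
    (fun y _ => hp y) (by simpa [div_eq_mul_inv] using hq) (mem_univ p) (mem_univ w)
  simp only [smul_apply, sub_apply,
    coe_innerSL_apply, nsmul_eq_mul, Nat.cast_ofNat, smul_eq_mul] at this
  rw [inner_sub_left, div_eq_mul_inv]
  linarith

theorem prox_function_value_bound (d : ℕ) (f h : EuclideanSpace ℝ (Fin d) → ℝ)
    (hconv : ConvexOn ℝ Set.univ h) (γ L : ℝ) (hγ : 0 < γ)
    (hdiff : Differentiable ℝ f)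
    (hL : ∀ x y, ‖gradient f x - gradient f y‖ ≤ L * ‖x - y‖)
    (x v xb : EuclideanSpace ℝ (Fin d))
    (hxb : ∀ y, h xb + ‖xb - (x - γ • v)‖ ^ 2 / (2 * γ)
      ≤ h y + ‖y - (x - γ • v)‖ ^ 2 / (2 * γ))
    (F : EuclideanSpace ℝ (Fin d) → ℝ) (hF : F = fun z => f z + h z) :
    ∀ w, F xb ≤ F w + ⟪gradient f x - v, xb - w⟫ - (1 / γ) * ⟪xb - x, xb - w⟫
      + L / 2 * ‖xb - x‖ ^ 2 + L / 2 * ‖w - x‖ ^ 2 := by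
  intro w
  have hf_xb := (abs_le.1 (abs_sub_sub_inner_gradient_le hdiff (fun z => hL z x) xb)).2
  have hf_w := (abs_le.1 (abs_sub_sub_inner_gradient_le hdiff (fun z => hL z x) w)).1
  have hh := hconv.add_inner_div_le_of_prox hxb w
  have hinner : ⟪gradient f x, xb - x⟫ - ⟪gradient f x, w - x⟫ - ⟪x - γ • v - xb, w - xb⟫ / γ
      = ⟪gradient f x - v, xb - w⟫ - (1 / γ) * ⟪xb - x, xb - w⟫ := by
    simp only [inner_sub_left, inner_sub_right, real_inner_smul_left]
    field_simp [hγ.ne']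
    ring
  subst hF
  linarith
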